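/- The following summation formula holds: ∑_{n=0}^{∞} (−a;q)_n (1 + a q^{2n}) aⁿ q^{n(3n−1)/2} / ((1 + a)(q;q)_n) = (−aq;q)_∞. In particular the series converges, so the vector ξ₁ := ∑_n β_n(1) e_n with β_n(1) = [ (−a;q)_n (1 + a q^{2n}) / ((q;q)_n (1 + a) aⁿ) ]^{1/2} q^{−n(n+1)/4} (−a)ⁿ q^{n²} belongs to ℓ²(ℕ,ℝ) and ‖ξ₁‖² = (−aq;q)_∞. -/

import Mathlib

noncomputable section
open scoped ENNReal
open Filter Topology

/-- The `q`-Pochhammer symbol `(x; q)_n = ∏_{k=0}^{n-1} (1 - x qᵏ)`. -/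
def qPoch (x q : ℝ) (n : ℕ) : ℝ := ∏ k ∈ Finset.range n, (1 - x * q ^ k)

/-- The infinite `q`-Pochhammer symbol `(x; q)_∞ = ∏_{k=0}^{∞} (1 - x qᵏ)`. -/
def qPochInf (x q : ℝ) : ℝ := ∏' k : ℕ, (1 - x * q ^ k)

/-- The alternative `q`-Charlier polynomial
`K_n(x; a; q) = ∑_{k=0}^n (q^{-n};q)_k (-a qⁿ;q)_k / (q;q)_k · (q x)^k`. -/
def altCharlier (a q : ℝ) (n : ℕ) (x : ℝ) : ℝ :=
  ∑ k ∈ Finset.range (n + 1),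
    qPoch ((q ^ n)⁻¹) q k * qPoch (-(a * q ^ n)) q k / qPoch q q k * (q * x) ^ k

/-- Off-diagonal Jacobi matrix coefficient `a_n`. -/
def acoef (q a : ℝ) (n : ℕ) : ℝ :=
  -(Real.sqrt (a * q ^ (3 * n + 1)) *
      Real.sqrt ((1 - q ^ (n + 1)) * (1 + a * q ^ n))) /
    ((1 + a * q ^ (2 * n + 1)) *
      Real.sqrt ((1 + a * q ^ (2 * n)) * (1 + a * q ^ (2 * n + 2))))

/-- Diagonal Jacobi matrix coefficient `b_n`. -/
def bcoef (q a : ℝ) (n : ℕ) : ℝ :=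
  q ^ n * ((1 + a * q ^ n) / ((1 + a * q ^ (2 * n)) * (1 + a * q ^ (2 * n + 1))) +
    a * q ^ ((n : ℤ) - 1) * (1 - q ^ n) /
      ((1 + a * q ^ (2 * (n : ℤ) - 1)) * (1 + a * q ^ (2 * n))))

/-- `a_{n-1}` with the convention `a_{-1} = 0`. -/
def aprev (q a : ℝ) : ℕ → ℝ
  | 0 => 0
  | n + 1 => acoef q a n

/-- The Hilbert space `ℓ²(ℕ, ℝ)`. -/
abbrev H : Type := lp (fun _ : ℕ => ℝ) 2

/-- The standard orthonormal basis vector `e_n` of `ℓ²(ℕ, ℝ)`. -/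
def e (n : ℕ) : H := lp.single 2 n (1 : ℝ)

/-- The coefficients `β_n(1)` with `K_n(1;a;q) = (-a)ⁿ q^{n²}` substituted. -/
def betaOne (q a : ℝ) (n : ℕ) : ℝ :=
  Real.sqrt (qPoch (-a) q n * (1 + a * q ^ (2 * n)) / (qPoch q q n * (1 + a) * a ^ n)) *
    q ^ (-(((n : ℝ) * ((n : ℝ) + 1)) / 4)) * ((-a) ^ n * q ^ (n ^ 2))

-- exponent lemma
lemma expE (n : ℕ) : (n+1) * (3*(n+1)-1)/2 = n*(3*n-1)/2 + (3*n+1) := by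
  rcases n with _ | k
  · decide
  · have e1 : 3*(k+1+1)-1 = 3*k+5 := by omega
    have e2 : 3*(k+1)-1 = 3*k+2 := by omega
    have h : (k+1+1)*(3*(k+1+1)-1) = (k+1)*(3*(k+1)-1) + (6*(k+1)+2) := by
      rw [e1, e2]; ring
    have h2 : 2 ∣ (k+1)*(3*(k+1)-1) := by
      rcases Nat.even_or_odd k with he | ho
      · obtain ⟨m, hm⟩ := he
        refine Dvd.dvd.mul_left ⟨3*m+1, by omega⟩ _
      · obtain ⟨m, hm⟩ := ho
        refine Dvd.dvd.mul_right ⟨m+1, by omega⟩ _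
    omega

lemma expE_ge (n : ℕ) : n ≤ n*(3*n-1)/2 := by
  rcases n with _ | k
  · simp
  · rw [Nat.le_div_iff_mul_le (by norm_num)]
    have : 3*(k+1)-1 = 3*k+2 := by omega
    rw [this]; nlinarith

lemma expE_even (n : ℕ) : 2 ∣ n*(3*n-1) := by
  rcases n with _ | k
  · simp
  · rcases Nat.even_or_odd k with he | ho
    · obtain ⟨m, hm⟩ := he
      refine Dvd.dvd.mul_left ⟨3*m+1, by omega⟩ _
    · obtain ⟨m, hm⟩ := ho
      refine Dvd.dvd.mul_right ⟨m+1, by omega⟩ _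

section Core
variable {q : ℝ} (hq0 : 0 < q) (hq1 : q < 1)

def Tt (q b : ℝ) (n : ℕ) : ℝ :=
  qPoch (-b) q n * (1 + b * q ^ (2 * n)) * b ^ n * q ^ (n * (3 * n - 1) / 2) / qPoch q q n

def Et (q b : ℝ) (m : ℕ) : ℝ :=
  qPoch (-(b*q)) q m * b ^ (m+1) * q ^ ((m+1) * (3 * (m+1) - 1) / 2) / qPoch q q m

def Gg (q b : ℝ) : ℝ := ∑' n, Tt q b n

lemma qPoch_succ (x q : ℝ) (n : ℕ) : qPoch x q (n+1) = qPoch x q n * (1 - x * q^n) :=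
  Finset.prod_range_succ _ _

lemma qPoch_succ' (x q : ℝ) (n : ℕ) : qPoch x q (n+1) = (1 - x) * qPoch (x*q) q n := by
  unfold qPoch
  rw [Finset.prod_range_succ', pow_zero, mul_one, mul_comm]
  congr 1
  refine Finset.prod_congr rfl fun k _ => ?_
  rw [pow_succ']
  ring

include hq0 hq1 in
lemma aux_pos (k : ℕ) : 0 < 1 - q * q ^ k := by
  have h1 : q ^ k ≤ 1 := pow_le_one₀ hq0.le hq1.le
  nlinarith

include hq0 hq1 in
lemma qPochq_pos (n : ℕ) : 0 < qPoch q q n := by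
  refine Finset.prod_pos fun k _ => ?_
  have h1 : q ^ (k+1) ≤ q := pow_le_of_le_one hq0.le hq1.le (by omega)
  have : q * q ^ k = q ^ (k+1) := by rw [pow_succ']
  nlinarith [pow_pos hq0 (k+1)]

include hq0 hq1 in
lemma qPochq_ge (n : ℕ) : (1-q)^n ≤ qPoch q q n := by
  rw [show (1-q)^n = ∏ _k ∈ Finset.range n, (1-q) by rw [Finset.prod_const, Finset.card_range]]
  refine Finset.prod_le_prod (fun k _ => by nlinarith) fun k _ => ?_
  have h1 : q * q ^ k ≤ q := by nlinarith [pow_le_one₀ hq0.le hq1.le (n := k), pow_nonneg hq0.le k]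
  nlinarith

lemma one_le_qPoch_neg (hq : 0 ≤ q) {b : ℝ} (hb : 0 ≤ b) (n : ℕ) : 1 ≤ qPoch (-b) q n := by
  have : (1:ℝ) = ∏ _k ∈ Finset.range n, 1 := by simp
  rw [this]
  refine Finset.prod_le_prod (by norm_num) fun k _ => ?_
  have := pow_nonneg hq k
  nlinarith

include hq1 in
lemma qPoch_neg_le (hq : 0 ≤ q) {b : ℝ} (hb : 0 ≤ b) (n : ℕ) : qPoch (-b) q n ≤ (1+b)^n := by
  rw [show (1+b)^n = ∏ _k ∈ Finset.range n, (1+b) by rw [Finset.prod_const, Finset.card_range]]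
  refine Finset.prod_le_prod (fun k _ => by nlinarith [pow_nonneg hq k]) fun k _ => ?_
  have h1 : q ^ k ≤ 1 := pow_le_one₀ hq hq1.le
  nlinarith

include hq0 hq1 in
lemma Tt_nonneg {b : ℝ} (hb : 0 ≤ b) (n : ℕ) : 0 ≤ Tt q b n := by
  have h1 := one_le_qPoch_neg hq0.le hb n
  have h2 := qPochq_pos hq0 hq1 n
  have h3 := pow_nonneg hq0.le (2*n)
  have h4 := pow_nonneg hb n
  have h5 := pow_nonneg hq0.le (n * (3*n-1)/2)
  unfold Tt
  positivity

include hq0 hq1 in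
lemma Et_nonneg {b : ℝ} (hb : 0 ≤ b) (m : ℕ) : 0 ≤ Et q b m := by
  have h1 := one_le_qPoch_neg hq0.le (by positivity : (0:ℝ) ≤ b*q) m
  have h2 := qPochq_pos hq0 hq1 m
  have h4 := pow_nonneg hb (m+1)
  have h5 := pow_nonneg hq0.le ((m+1) * (3*(m+1)-1)/2)
  unfold Et
  positivity
end Core

section Core2
variable {q : ℝ} (hq0 : 0 < q) (hq1 : q < 1)

include hq0 hq1 in
lemma Tt_succ_le {b : ℝ} (hb : 0 ≤ b) (n : ℕ) :
    Tt q b (n+1) ≤ ((1+b)^2 * b * q / (1-q)) * q ^ n * Tt q b n := by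
  have hQ : (0:ℝ) < qPoch q q n := qPochq_pos hq0 hq1 n
  have hD : (0:ℝ) < 1 - q * q ^ n := aux_pos hq0 hq1 n
  have hqn : (0:ℝ) ≤ q ^ n := pow_nonneg hq0.le n
  have hq2n : (0:ℝ) ≤ q ^ (2*n) := pow_nonneg hq0.le _
  have h2n1 : (0:ℝ) < 1 + b * q ^ (2*n) := by nlinarith
  have heq : Tt q b (n+1) = Tt q b n *
      ((1 + b*q^n) * (1 + b*(q^(2*n)*q^2)) * (b * (q^n)^3 * q) /
        ((1 + b*q^(2*n)) * (1 - q*q^n))) := by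
    unfold Tt
    rw [expE n, qPoch_succ (-b) q n, qPoch_succ q q n]
    have e2 : q ^ (2*(n+1)) = q^(2*n) * q^2 := by rw [← pow_add]; ring_nf
    have e3 : q ^ (n*(3*n-1)/2 + (3*n+1)) = q^(n*(3*n-1)/2) * ((q^n)^3 * q) := by
      rw [pow_add, ← pow_mul]; ring_nf
    rw [e2, e3]
    field_simp
    ring
  have hq2 : q^2 ≤ 1 := by nlinarith
  have hqk1 : q ^ n ≤ 1 := pow_le_one₀ hq0.le hq1.le
  have hq2n1 : q ^ (2*n) ≤ 1 := pow_le_one₀ hq0.le hq1.le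
  have k1 : (1 + b*q^n) ≤ (1+b) := by nlinarith
  have k2 : (1 + b*(q^(2*n)*q^2)) ≤ (1+b) := by
    nlinarith [mul_le_mul hq2n1 hq2 (sq_nonneg q) (by norm_num : (0:ℝ) ≤ 1)]
  have k3 : (q^n)^3 ≤ q^n := by nlinarith [pow_nonneg hq0.le n, sq_nonneg (q^n)]
  have k4 : (1-q) ≤ (1 + b*q^(2*n)) * (1 - q*q^n) := by
    nlinarith [mul_nonneg (mul_nonneg hb hq2n) hD.le,
      mul_le_mul_of_nonneg_left hqk1 hq0.le]
  have hrat : (1 + b*q^n) * (1 + b*(q^(2*n)*q^2)) * (b * (q^n)^3 * q) /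
        ((1 + b*q^(2*n)) * (1 - q*q^n)) ≤ ((1+b)^2 * b * q / (1-q)) * q ^ n := by
    have m1 : (1 + b*q^n) * (1 + b*(q^(2*n)*q^2)) ≤ (1+b)*(1+b) :=
      mul_le_mul k1 k2 (by positivity) (by positivity)
    have m2 : b * (q^n)^3 * q ≤ b * q^n * q :=
      mul_le_mul_of_nonneg_right (mul_le_mul_of_nonneg_left k3 hb) hq0.le
    have m3 : (1 + b*q^n) * (1 + b*(q^(2*n)*q^2)) * (b * (q^n)^3 * q)
        ≤ (1+b)*(1+b) * (b * q^n * q) :=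
      mul_le_mul m1 m2 (by positivity) (by positivity)
    have hd : 0 < (1:ℝ) - q := by linarith
    calc (1 + b*q^n) * (1 + b*(q^(2*n)*q^2)) * (b * (q^n)^3 * q) /
          ((1 + b*q^(2*n)) * (1 - q*q^n))
        ≤ ((1+b)*(1+b) * (b * q^n * q)) / (1-q) :=
          div_le_div₀ (by positivity) m3 hd k4
      _ = ((1+b)^2 * b * q / (1-q)) * q ^ n := by ring
  calc Tt q b (n+1) = Tt q b n * _ := heq
    _ ≤ Tt q b n * (((1+b)^2 * b * q / (1-q)) * q ^ n) :=
        mul_le_mul_of_nonneg_left hrat (Tt_nonneg hq0 hq1 hb n)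
    _ = ((1+b)^2 * b * q / (1-q)) * q ^ n * Tt q b n := by ring
end Core2

section Core3
variable {q : ℝ} (hq0 : 0 < q) (hq1 : q < 1)

include hq0 hq1 in
lemma Et_succ_le {b : ℝ} (hb : 0 ≤ b) (m : ℕ) :
    Et q b (m+1) ≤ ((1+b)^2 * b * q / (1-q)) * q ^ m * Et q b m := by
  have hQ : (0:ℝ) < qPoch q q m := qPochq_pos hq0 hq1 m
  have hD : (0:ℝ) < 1 - q * q ^ m := aux_pos hq0 hq1 m
  have hqm : (0:ℝ) ≤ q ^ m := pow_nonneg hq0.le m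
  have heq : Et q b (m+1) = Et q b m *
      ((1 + b*q*q^m) * (b * ((q^m)^3 * q^4)) / (1 - q*q^m)) := by
    unfold Et
    rw [expE (m+1), expE m, qPoch_succ (-(b*q)) q m, qPoch_succ q q m]
    have e3 : q ^ (m*(3*m-1)/2 + (3*m+1) + (3*(m+1)+1)) =
        q^(m*(3*m-1)/2 + (3*m+1)) * ((q^m)^3 * q^4) := by
      rw [pow_add, ← pow_mul]; ring_nf
    rw [e3]
    field_simp
    ring
  have hqk1 : q ^ m ≤ 1 := pow_le_one₀ hq0.le hq1.le
  have hq3 : q^4 ≤ q := by nlinarith [sq_nonneg q, sq_nonneg (q^2), pow_le_one₀ hq0.le hq1.le (n := 3)]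
  have k1 : (1 + b*q*q^m) ≤ (1+b)*(1+b) := by nlinarith
  have k3 : (q^m)^3 ≤ q^m := by nlinarith [sq_nonneg (q^m)]
  have k4 : (1-q) ≤ 1 - q*q^m := by nlinarith [mul_le_mul_of_nonneg_left hqk1 hq0.le]
  have hrat : (1 + b*q*q^m) * (b * ((q^m)^3 * q^4)) / (1 - q*q^m)
      ≤ ((1+b)^2 * b * q / (1-q)) * q ^ m := by
    have m2 : b * ((q^m)^3 * q^4) ≤ b * (q^m * q) := by
      refine mul_le_mul_of_nonneg_left (mul_le_mul k3 hq3 (by positivity) hqm) hb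
    have m3 : (1 + b*q*q^m) * (b * ((q^m)^3 * q^4)) ≤ ((1+b)*(1+b)) * (b * (q^m * q)) :=
      mul_le_mul k1 m2 (by positivity) (by positivity)
    calc (1 + b*q*q^m) * (b * ((q^m)^3 * q^4)) / (1 - q*q^m)
        ≤ ((1+b)*(1+b)) * (b * (q^m * q)) / (1-q) :=
          div_le_div₀ (by positivity) m3 (by linarith) k4
      _ = ((1+b)^2 * b * q / (1-q)) * q ^ m := by ring
  calc Et q b (m+1) = Et q b m * _ := heq
    _ ≤ Et q b m * (((1+b)^2 * b * q / (1-q)) * q ^ m) :=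
        mul_le_mul_of_nonneg_left hrat (Et_nonneg hq0 hq1 hb m)
    _ = ((1+b)^2 * b * q / (1-q)) * q ^ m * Et q b m := by ring

lemma summable_of_decay {c : ℕ → ℝ} {K r : ℝ} (hr0 : 0 ≤ r) (hr1 : r < 1)
    (hc : ∀ n, 0 ≤ c n) (h : ∀ n, c (n+1) ≤ K * r^n * c n) : Summable c := by
  apply summable_of_ratio_norm_eventually_le (r := 1/2) (by norm_num)
  have hK : Tendsto (fun n => K * r^n) atTop (𝓝 0) := by
    simpa using (tendsto_pow_atTop_nhds_zero_of_lt_one hr0 hr1).const_mul K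
  filter_upwards [hK.eventually_le_const (by norm_num : (0:ℝ) < 1/2)] with n hn
  rw [Real.norm_of_nonneg (hc (n+1)), Real.norm_of_nonneg (hc n)]
  calc c (n+1) ≤ K * r^n * c n := h n
    _ ≤ (1/2) * c n := mul_le_mul_of_nonneg_right hn (hc n)

include hq0 hq1 in
lemma summable_Tt {b : ℝ} (hb : 0 ≤ b) : Summable (Tt q b) :=
  summable_of_decay hq0.le hq1 (Tt_nonneg hq0 hq1 hb) (Tt_succ_le hq0 hq1 hb)

include hq0 hq1 in
lemma summable_Et {b : ℝ} (hb : 0 ≤ b) : Summable (Et q b) :=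
  summable_of_decay hq0.le hq1 (Et_nonneg hq0 hq1 hb) (Et_succ_le hq0 hq1 hb)
end Core3

section Core4
variable {q : ℝ} (hq0 : 0 < q) (hq1 : q < 1)

include hq0 hq1 in
lemma key_identity {b : ℝ} (hb : 0 ≤ b) (m : ℕ) :
    Tt q b (m+1) = (1+b) * Tt q (b*q) (m+1) + (1+b) * (Et q b m - Et q b (m+1)) := by
  have hQ : (0:ℝ) < qPoch q q m := qPochq_pos hq0 hq1 m
  have hD : (0:ℝ) < 1 - q * q ^ m := aux_pos hq0 hq1 m
  unfold Tt Et
  rw [expE (m+1), expE m, qPoch_succ' (-b) q m, qPoch_succ (-(b*q)) q m,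
    qPoch_succ q q m]
  have e1 : qPoch (-b*q) q m = qPoch (-(b*q)) q m := by rw [neg_mul]
  rw [e1]
  have e2 : q ^ (2*(m+1)) = (q^m)^2 * q^2 := by rw [← pow_mul, ← pow_add]; ring_nf
  have e3 : q ^ (m*(3*m-1)/2 + (3*m+1)) = q^(m*(3*m-1)/2) * ((q^m)^3 * q) := by
    rw [pow_add, ← pow_mul]; ring_nf
  have e4 : q ^ (m*(3*m-1)/2 + (3*m+1) + (3*(m+1)+1)) =
      q^(m*(3*m-1)/2) * ((q^m)^6 * q^5) := by
    have ee : m*(3*m-1)/2 + (3*m+1) + (3*(m+1)+1) = m*(3*m-1)/2 + (m*6+5) := by omega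
    rw [ee, pow_add, pow_add, pow_mul]
  rw [e2, e3, e4]
  field_simp
  ring

include hq0 hq1 in
lemma funEq {b : ℝ} (hb : 0 ≤ b) : Gg q b = (1+b) * Gg q (b*q) := by
  have hbq : 0 ≤ b*q := by positivity
  have hT := (summable_Tt hq0 hq1 hb).hasSum
  have hTq := (summable_Tt hq0 hq1 hbq).hasSum
  have hE := summable_Et hq0 hq1 hb
  -- shifted sums
  have hT1 : HasSum (fun m => Tt q b (m+1)) (Gg q b - Tt q b 0) := by
    refine (hasSum_nat_add_iff 1).mpr ?_
    rw [Finset.sum_range_one, sub_add_cancel]; exact hT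
  have hTq1 : HasSum (fun m => Tt q (b*q) (m+1)) (Gg q (b*q) - Tt q (b*q) 0) := by
    refine (hasSum_nat_add_iff 1).mpr ?_
    rw [Finset.sum_range_one, sub_add_cancel]; exact hTq
  -- telescoping sum of Et differences
  have hEdiff : HasSum (fun m => Et q b m - Et q b (m+1)) (Et q b 0) := by
    have hs : Summable (fun m => Et q b m - Et q b (m+1)) :=
      hE.sub ((summable_nat_add_iff 1).mpr hE)
    obtain ⟨S, hS⟩ := hs
    have hpart := hS.tendsto_sum_nat
    have hform : ∀ N, ∑ i ∈ Finset.range N, (Et q b i - Et q b (i+1)) = Et q b 0 - Et q b N :=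
      fun N => Finset.sum_range_sub' (Et q b) N
    have hE0 : Tendsto (fun N => Et q b 0 - Et q b N) atTop (𝓝 (Et q b 0 - 0)) :=
      tendsto_const_nhds.sub hE.tendsto_atTop_zero
    rw [sub_zero] at hE0
    have : S = Et q b 0 := by
      refine tendsto_nhds_unique ?_ hE0
      simpa only [hform] using hpart
    rwa [this] at hS
  have hRHS : HasSum (fun m => (1+b) * Tt q (b*q) (m+1) + (1+b) * (Et q b m - Et q b (m+1)))
      ((1+b) * (Gg q (b*q) - Tt q (b*q) 0) + (1+b) * Et q b 0) :=
    (hTq1.mul_left _).add (hEdiff.mul_left _)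
  have hsame : (fun m => Tt q b (m+1)) =
      (fun m => (1+b) * Tt q (b*q) (m+1) + (1+b) * (Et q b m - Et q b (m+1))) :=
    funext fun m => key_identity hq0 hq1 hb m
  rw [← hsame] at hRHS
  have huniq := hT1.unique hRHS
  have hv0 : Tt q b 0 = 1 + b := by simp [Tt, qPoch]
  have hv1 : Tt q (b*q) 0 = 1 + b*q := by simp [Tt, qPoch]
  have hv2 : Et q b 0 = b * q := by
    simp [Et, qPoch]
  rw [hv0, hv1, hv2] at huniq
  nlinarith [huniq]
end Core4

section Core5
variable {q : ℝ} (hq0 : 0 < q) (hq1 : q < 1)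

include hq0 hq1 in
lemma Gg_ge {b : ℝ} (hb : 0 ≤ b) : 1 + b ≤ Gg q b := by
  have h := Summable.le_tsum (summable_Tt hq0 hq1 hb) 0 (fun j _ => Tt_nonneg hq0 hq1 hb j)
  have hv0 : Tt q b 0 = 1 + b := by simp [Tt, qPoch]
  rw [hv0] at h
  exact h

include hq0 hq1 in
lemma Tt_le {b : ℝ} (hb : 0 ≤ b) (n : ℕ) : Tt q b n ≤ (1+b) * ((1+b)*b*q/(1-q))^n := by
  have hQ := qPochq_pos hq0 hq1 n
  have hQge := qPochq_ge hq0 hq1 n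
  have h1q : (0:ℝ) < 1-q := by linarith
  have hb1 : (0:ℝ) ≤ 1+b := by linarith
  have hnum : qPoch (-b) q n * (1 + b*q^(2*n)) * b^n * q^(n*(3*n-1)/2)
      ≤ (1+b)^n * (1+b) * b^n * q^n := by
    have b1 := qPoch_neg_le hq1 hq0.le hb n
    have b2 : 1 + b*q^(2*n) ≤ 1+b := by
      nlinarith [pow_le_one₀ hq0.le hq1.le (n := 2*n), pow_nonneg hq0.le (2*n)]
    have b3 : q^(n*(3*n-1)/2) ≤ q^n := pow_le_pow_of_le_one hq0.le hq1.le (expE_ge n)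
    have hpn : (0:ℝ) ≤ 1 + b*q^(2*n) := by positivity
    have m1 : qPoch (-b) q n * (1 + b*q^(2*n)) ≤ (1+b)^n * (1+b) :=
      mul_le_mul b1 b2 hpn (pow_nonneg hb1 n)
    have m2 : b^n * q^(n*(3*n-1)/2) ≤ b^n * q^n :=
      mul_le_mul_of_nonneg_left b3 (pow_nonneg hb n)
    have hg1 : (1:ℝ) ≤ qPoch (-b) q n := one_le_qPoch_neg hq0.le hb n
    calc qPoch (-b) q n * (1 + b*q^(2*n)) * b^n * q^(n*(3*n-1)/2)
        = (qPoch (-b) q n * (1 + b*q^(2*n))) * (b^n * q^(n*(3*n-1)/2)) := by ring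
      _ ≤ ((1+b)^n * (1+b)) * (b^n * q^n) := by
          refine mul_le_mul m1 m2 (by positivity) (by positivity)
      _ = (1+b)^n * (1+b) * b^n * q^n := by ring
  unfold Tt
  calc qPoch (-b) q n * (1 + b*q^(2*n)) * b^n * q^(n*(3*n-1)/2) / qPoch q q n
      ≤ ((1+b)^n * (1+b) * b^n * q^n) / (1-q)^n := by
        refine div_le_div₀ (by positivity) hnum (by positivity) hQge
    _ = (1+b) * ((1+b)*b*q/(1-q))^n := by
        rw [div_pow, mul_pow, mul_pow]; field_simp

include hq0 hq1 in
lemma Gg_le {b : ℝ} (hb : 0 ≤ b) (hb1 : b ≤ 1)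
    (hr : (1+b)*b*q/(1-q) ≤ 1/2) : Gg q b ≤ 1 + b + 4*((1+b)*b*q/(1-q)) := by
  set r := (1+b)*b*q/(1-q) with hrdef
  have h1q : (0:ℝ) < 1-q := by linarith
  have hr0 : 0 ≤ r := by positivity
  have hr1 : r < 1 := by linarith
  have hsum := summable_Tt hq0 hq1 hb
  have hgeo : Summable (fun n : ℕ => (1+b) * r^(n+1)) := by
    have : (fun n : ℕ => (1+b) * r^(n+1)) = (fun n : ℕ => ((1+b)*r) * r^n) := by
      funext n; rw [pow_succ']; ring
    rw [this]
    exact (summable_geometric_of_lt_one hr0 hr1).mul_left _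
  have htail : ∑' n : ℕ, Tt q b (n+1) ≤ ∑' n : ℕ, (1+b) * r^(n+1) := by
    refine Summable.tsum_le_tsum (fun n => ?_) ((summable_nat_add_iff 1).mpr hsum) hgeo
    exact Tt_le hq0 hq1 hb (n+1)
  have hgeoval : ∑' n : ℕ, (1+b) * r^(n+1) = (1+b) * r * (1-r)⁻¹ := by
    have : (fun n : ℕ => (1+b) * r^(n+1)) = (fun n : ℕ => ((1+b)*r) * r^n) := by
      funext n; rw [pow_succ']; ring
    rw [this, tsum_mul_left, tsum_geometric_of_lt_one hr0 hr1]
  have hGg : Gg q b = Tt q b 0 + ∑' n : ℕ, Tt q b (n+1) := Summable.tsum_eq_zero_add hsum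
  have hv0 : Tt q b 0 = 1 + b := by simp [Tt, qPoch]
  have hinv : (1-r)⁻¹ ≤ 2 := by
    rw [inv_le_comm₀ (by linarith) (by norm_num)]
    linarith
  have hfin : (1+b) * r * (1-r)⁻¹ ≤ 4*r := by
    have h2 : (1+b) * r ≤ 2 * r := by nlinarith
    have h3 : (0:ℝ) ≤ (1-r)⁻¹ := inv_nonneg.mpr (by linarith)
    nlinarith
  rw [hGg, hv0]
  linarith [htail.trans (hgeoval ▸ hfin)]

include hq0 hq1 in
lemma Gg_iter {b : ℝ} (hb : 0 ≤ b) (N : ℕ) :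
    Gg q b = qPoch (-b) q N * Gg q (b * q^N) := by
  induction N with
  | zero => simp [qPoch]
  | succ n ih =>
    rw [ih, qPoch_succ]
    have hbn : 0 ≤ b * q^n := by positivity
    have := funEq hq0 hq1 hbn
    rw [this]
    have e : b * q^n * q = b * q^(n+1) := by rw [pow_succ]; ring
    rw [e]
    ring_nf
end Core5

section Core6
variable {q : ℝ} (hq0 : 0 < q) (hq1 : q < 1)

include hq0 hq1 in
lemma tendsto_Gg_one {b : ℝ} (hb : 0 ≤ b) :
    Tendsto (fun N => Gg q (b * q^N)) atTop (𝓝 1) := by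
  have h1q : (0:ℝ) < 1-q := by linarith
  have hc : Tendsto (fun N : ℕ => b * q^N) atTop (𝓝 0) := by
    simpa using (tendsto_pow_atTop_nhds_zero_of_lt_one hq0.le hq1).const_mul b
  have hcn : ∀ N, 0 ≤ b * q^N := fun N => by positivity
  have hr : Tendsto (fun N : ℕ => (1 + b*q^N) * (b*q^N) * q / (1-q)) atTop (𝓝 0) := by
    have := (((tendsto_const_nhds (x := (1:ℝ))).add hc).mul hc).mul_const q
    have h2 := this.div_const (1-q)
    simpa using h2
  have hupper : Tendsto (fun N : ℕ => 1 + b*q^N + 4*((1 + b*q^N) * (b*q^N) * q / (1-q)))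
      atTop (𝓝 1) := by
    have := ((tendsto_const_nhds (x := (1:ℝ))).add hc).add (hr.const_mul 4)
    simpa using this
  refine tendsto_of_tendsto_of_tendsto_of_le_of_le' (tendsto_const_nhds (x := (1:ℝ)))
    hupper ?_ ?_
  · filter_upwards with N
    have := Gg_ge hq0 hq1 (hcn N)
    linarith [hcn N]
  · have ev1 : ∀ᶠ N : ℕ in atTop, b * q^N ≤ 1 :=
      hc.eventually_le_const (by norm_num)
    have ev2 : ∀ᶠ N : ℕ in atTop, (1 + b*q^N) * (b*q^N) * q / (1-q) ≤ 1/2 :=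
      hr.eventually_le_const (by norm_num)
    filter_upwards [ev1, ev2] with N h1 h2
    exact Gg_le hq0 hq1 (hcn N) h1 h2

include hq0 hq1 in
lemma Gg_pos {b : ℝ} (hb : 0 ≤ b) : 0 < Gg q b :=
  lt_of_lt_of_le (by linarith : (0:ℝ) < 1 + b) (Gg_ge hq0 hq1 hb)

include hq0 hq1 in
lemma tendsto_qPoch_Gg {b : ℝ} (hb : 0 ≤ b) :
    Tendsto (fun N => qPoch (-b) q N) atTop (𝓝 (Gg q b)) := by
  have h1 := tendsto_Gg_one hq0 hq1 hb
  have heq : ∀ N, qPoch (-b) q N = Gg q b / Gg q (b*q^N) := by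
    intro N
    have hpos : 0 < Gg q (b*q^N) := Gg_pos hq0 hq1 (by positivity)
    rw [eq_div_iff hpos.ne']
    exact (Gg_iter hq0 hq1 hb N).symm
  have h2 : Tendsto (fun N => Gg q b / Gg q (b*q^N)) atTop (𝓝 (Gg q b / 1)) :=
    tendsto_const_nhds.div h1 one_ne_zero
  rw [div_one] at h2
  simpa only [← heq] using h2

include hq0 hq1 in
lemma hasProd_Gg {b : ℝ} (hb : 0 ≤ b) : HasProd (fun k => 1 + b * q^k) (Gg q b) := by
  set f : ℕ → ℝ := fun k => 1 + b * q^k with hf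
  have hf1 : ∀ k, 1 ≤ f k := fun k => le_add_of_nonneg_right (by positivity)
  have hone_le : ∀ s : Finset ℕ, 1 ≤ ∏ i ∈ s, f i := by
    intro s
    have := Finset.prod_le_prod (f := fun _ : ℕ => (1:ℝ)) (g := f)
      (fun i _ => zero_le_one) (fun i _ => hf1 i) (s := s)
    simpa using this
  have hmono : Monotone (fun s : Finset ℕ => ∏ i ∈ s, f i) := by
    intro s t hst
    show ∏ i ∈ s, f i ≤ ∏ i ∈ t, f i
    rw [← Finset.prod_sdiff hst]
    have h1 := hone_le (t \ s)
    have h2 := hone_le s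
    nlinarith
  have hprodrange : ∀ N, ∏ k ∈ Finset.range N, f k = qPoch (-b) q N := by
    intro N
    unfold qPoch
    refine Finset.prod_congr rfl fun k _ => by ring
  have hbdd : BddAbove (Set.range fun s : Finset ℕ => ∏ i ∈ s, f i) := by
    refine ⟨Gg q b, ?_⟩
    rintro x ⟨s, rfl⟩
    obtain ⟨N, hN⟩ := s.exists_nat_subset_range
    have h1 : ∏ i ∈ s, f i ≤ ∏ k ∈ Finset.range N, f k := hmono hN
    have h2 : qPoch (-b) q N ≤ Gg q b := by
      have hiter := Gg_iter hq0 hq1 hb N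
      have hge := Gg_ge hq0 hq1 (by positivity : 0 ≤ b * q^N)
      have hp1 : 1 ≤ qPoch (-b) q N := one_le_qPoch_neg hq0.le hb N
      nlinarith [mul_le_mul_of_nonneg_left hge (zero_le_one.trans hp1),
        mul_nonneg (mul_nonneg (zero_le_one.trans hp1) hb) (pow_nonneg hq0.le N)]
    calc ∏ i ∈ s, f i ≤ ∏ k ∈ Finset.range N, f k := h1
      _ = qPoch (-b) q N := hprodrange N
      _ ≤ Gg q b := h2
  have hlub := isLUB_ciSup hbdd
  have hprod : HasProd f (⨆ s : Finset ℕ, ∏ i ∈ s, f i) :=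
    tendsto_atTop_isLUB hmono hlub
  have h2 : Tendsto (fun N => ∏ k ∈ Finset.range N, f k) atTop
      (𝓝 (⨆ s : Finset ℕ, ∏ i ∈ s, f i)) := hprod.comp tendsto_finset_range
  have h3 : Tendsto (fun N => ∏ k ∈ Finset.range N, f k) atTop (𝓝 (Gg q b)) := by
    simpa only [hprodrange] using tendsto_qPoch_Gg hq0 hq1 hb
  have : (⨆ s : Finset ℕ, ∏ i ∈ s, f i) = Gg q b := tendsto_nhds_unique h2 h3
  rwa [this] at hprod
end Core6

lemma expE_cast (n : ℕ) : ((n*(3*n-1)/2 : ℕ) : ℝ) = (3*(n:ℝ)^2 - n)/2 := by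
  rcases n with _ | k
  · simp
  · have e2 : 3*(k+1)-1 = 3*k+2 := by omega
    rw [e2]
    have hdvd : 2 ∣ (k+1)*(3*k+2) := by
      rcases Nat.even_or_odd k with he | ho
      · obtain ⟨m, hm⟩ := he
        exact Dvd.dvd.mul_left ⟨3*m+1, by omega⟩ _
      · obtain ⟨m, hm⟩ := ho
        exact Dvd.dvd.mul_right ⟨m+1, by omega⟩ _
    rw [Nat.cast_div hdvd (by norm_num)]
    push_cast
    ring

section Beta
variable {q a : ℝ} (hq0 : 0 < q) (hq1 : q < 1) (ha : 0 < a)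

include hq0 hq1 ha in
lemma beta_sq (n : ℕ) : betaOne q a n ^ 2 =
    qPoch (-a) q n * (1 + a * q ^ (2 * n)) * a ^ n * q ^ (n * (3 * n - 1) / 2) /
      ((1 + a) * qPoch q q n) := by
  have hQ := qPochq_pos hq0 hq1 n
  have hPneg : (0:ℝ) < qPoch (-a) q n :=
    lt_of_lt_of_le one_pos (one_le_qPoch_neg hq0.le ha.le n)
  have ha1 : (0:ℝ) < 1 + a := by linarith
  have harg : (0:ℝ) ≤ qPoch (-a) q n * (1 + a * q ^ (2*n)) / (qPoch q q n * (1+a) * a^n) := by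
    positivity
  unfold betaOne
  rw [mul_pow, mul_pow, mul_pow, Real.sq_sqrt harg]
  set x : ℝ := -(((n : ℝ) * ((n : ℝ) + 1)) / 4) with hx
  have hqpow : (q ^ x)^2 * (q ^ (n^2))^2 = q ^ (n*(3*n-1)/2) := by
    have h1 : (q ^ x)^(2:ℕ) = q ^ (x * 2) := by
      rw [← Real.rpow_natCast (q ^ x) 2, ← Real.rpow_mul hq0.le]
      norm_num
    have h2 : (q ^ (n^2 : ℕ))^(2:ℕ) = q ^ ((2*n^2 : ℕ)) := by
      rw [← pow_mul]; ring_nf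
    rw [h1, h2, ← Real.rpow_natCast q (2*n^2), ← Real.rpow_add hq0,
      ← Real.rpow_natCast q (n*(3*n-1)/2)]
    congr 1
    rw [expE_cast]
    push_cast
    ring
  have hm : ((-a)^n)^2 = a^n * a^n := by
    rw [← pow_mul, mul_comm n 2, pow_mul, neg_sq, ← pow_mul, mul_comm 2 n, pow_mul]
    ring
  calc qPoch (-a) q n * (1 + a * q ^ (2*n)) / (qPoch q q n * (1+a) * a^n) *
        (q ^ x)^2 * (((-a)^n)^2 * (q ^ (n^2))^2)
      = qPoch (-a) q n * (1 + a * q ^ (2*n)) / (qPoch q q n * (1+a) * a^n) *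
        (((-a)^n)^2) * ((q ^ x)^2 * (q ^ (n^2))^2) := by ring
    _ = qPoch (-a) q n * (1 + a * q ^ (2*n)) / (qPoch q q n * (1+a) * a^n) *
        (a^n * a^n) * q ^ (n*(3*n-1)/2) := by rw [hqpow, hm]
    _ = qPoch (-a) q n * (1 + a * q ^ (2*n)) * a ^ n * q ^ (n*(3*n-1)/2) /
        ((1 + a) * qPoch q q n) := by
        field_simp
end Beta
/-- `∑_{n=0}^∞ (-a;q)_n (1 + a q^{2n}) aⁿ q^{n(3n-1)/2} / ((1+a)(q;q)_n) = (-aq;q)_∞`;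
consequently `ξ₁ = ∑ β_n(1) e_n ∈ ℓ²(ℕ,ℝ)` and `‖ξ₁‖² = (-aq;q)_∞`. -/
theorem statement5 (q a : ℝ) (hq0 : 0 < q) (hq1 : q < 1) (ha : 0 < a) :
    HasSum
        (fun n : ℕ =>
          qPoch (-a) q n * (1 + a * q ^ (2 * n)) * a ^ n * q ^ (n * (3 * n - 1) / 2) /
            ((1 + a) * qPoch q q n))
        (qPochInf (-(a * q)) q) ∧
      Memℓp (fun n : ℕ => betaOne q a n) 2 ∧
      ∀ ξ : H, (∀ n : ℕ, ξ n = betaOne q a n) → ‖ξ‖ ^ 2 = qPochInf (-(a * q)) q := by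
  have ha1 : (0:ℝ) < 1 + a := by linarith
  have hsum : HasSum (Tt q a) (Gg q a) := (summable_Tt hq0 hq1 ha.le).hasSum
  have hfun : (fun n : ℕ =>
      qPoch (-a) q n * (1 + a * q ^ (2 * n)) * a ^ n * q ^ (n * (3 * n - 1) / 2) /
        ((1 + a) * qPoch q q n)) = fun n => Tt q a n / (1+a) := by
    funext n
    unfold Tt
    rw [div_div, mul_comm (qPoch q q n) (1+a)]
  have hval : qPochInf (-(a*q)) q = Gg q a / (1+a) := by
    have h1 : qPochInf (-(a*q)) q = Gg q (a*q) := by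
      have hp := hasProd_Gg hq0 hq1 (by positivity : (0:ℝ) ≤ a*q)
      unfold qPochInf
      have he : (fun k : ℕ => 1 - -(a*q) * q^k) = (fun k : ℕ => 1 + (a*q) * q^k) :=
        funext fun k => by ring
      rw [he, hp.tprod_eq]
    rw [h1, funEq hq0 hq1 ha.le]
    field_simp
  have hmain : HasSum
      (fun n : ℕ =>
        qPoch (-a) q n * (1 + a * q ^ (2 * n)) * a ^ n * q ^ (n * (3 * n - 1) / 2) /
          ((1 + a) * qPoch q q n))
      (qPochInf (-(a*q)) q) := by
    rw [hfun, hval]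
    exact hsum.div_const _
  refine ⟨hmain, ?_, ?_⟩
  · -- Memℓp
    apply memℓp_gen
    have htoReal : ((2:ℝ≥0∞)).toReal = 2 := by norm_num
    have hconv : (fun n : ℕ => ‖betaOne q a n‖ ^ ((2:ℝ≥0∞)).toReal)
        = fun n : ℕ => betaOne q a n ^ 2 := by
      funext n
      rw [htoReal, show (2:ℝ) = ((2:ℕ):ℝ) by norm_num, Real.rpow_natCast, Real.norm_eq_abs, sq_abs]
    rw [hconv]
    have hb : (fun n : ℕ => betaOne q a n ^ 2) = (fun n : ℕ =>
        qPoch (-a) q n * (1 + a * q ^ (2 * n)) * a ^ n * q ^ (n * (3 * n - 1) / 2) /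
          ((1 + a) * qPoch q q n)) := funext fun n => beta_sq hq0 hq1 ha n
    rw [hb]
    exact hmain.summable
  · intro ξ hξ
    have htoReal : ((2:ℝ≥0∞)).toReal = 2 := by norm_num
    have h2 := lp.norm_rpow_eq_tsum (p := 2) (by norm_num) ξ
    have hterm : (fun n : ℕ => ‖ξ n‖ ^ ((2:ℝ≥0∞)).toReal) = fun n : ℕ =>
        qPoch (-a) q n * (1 + a * q ^ (2 * n)) * a ^ n * q ^ (n * (3 * n - 1) / 2) /
          ((1 + a) * qPoch q q n) := by
      funext n
      rw [htoReal, show (2:ℝ) = ((2:ℕ):ℝ) by norm_num, Real.rpow_natCast, Real.norm_eq_abs, hξ n, sq_abs]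
      exact beta_sq hq0 hq1 ha n
    rw [htoReal] at h2
    rw [show (2:ℕ) = ((2:ℕ)) by rfl]
    have hpow : ‖ξ‖ ^ (2:ℕ) = ‖ξ‖ ^ (2:ℝ) := by
      rw [show (2:ℝ) = ((2:ℕ):ℝ) by norm_num, Real.rpow_natCast]
    rw [hpow, h2]
    have : ∑' n : ℕ, ‖ξ n‖ ^ (2:ℝ) = qPochInf (-(a*q)) q := by
      have := hterm
      rw [htoReal] at this
      rw [this]
      exact hmain.tsum_eq
    exact this
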